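/- The spectral-mixture kernel k(Δ) = ∑_{k=1}^K w_k ∏_{j=1}^d cos(2π μ_{k,j} Δ_j) exp(−2π² σ_{k,j}² Δ_j²), with w_k ≥ 0, is a positive semidefinite function on ℝ^d; i.e., for any points Δ_1,…,Δ_m ∈ ℝ^d and scalars c_1,…,c_m, ∑_{a,b} c_a c_b k(Δ_a − Δ_b) ≥ 0. -/
import Mathlib

open Finset Real Nat

private lemma triple_comm {ι κ : Type*} [Fintype ι] [Fintype κ] (f : ι → ι → κ → ℝ) :
    ∑ a : ι, ∑ b : ι, ∑ e : κ, f a b e = ∑ e : κ, ∑ a : ι, ∑ b : ι, f a b e := by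
  have h : ∀ a : ι, ∑ b : ι, ∑ e : κ, f a b e = ∑ e : κ, ∑ b : ι, f a b e :=
    fun a => Finset.sum_comm
  simp_rw [h]
  exact Finset.sum_comm

private lemma sum_sum_eq_sq {ι κ : Type*} [Fintype ι] [Fintype κ] (F : ι → κ → ℝ) :
    ∑ a : ι, ∑ b : ι, ∑ p : κ, F a p * F b p = ∑ p : κ, (∑ a : ι, F a p) ^ 2 := by
  have h1 : ∀ a : ι, ∑ b : ι, ∑ p : κ, F a p * F b p
      = ∑ p : κ, ∑ b : ι, F a p * F b p := fun a => Finset.sum_comm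
  simp_rw [h1]
  rw [Finset.sum_comm]
  refine Finset.sum_congr rfl fun p _ => ?_
  rw [sq, Finset.sum_mul_sum]

private lemma exp_inner_psd {m d : ℕ} (r : Fin m → ℝ) (v : Fin m → Fin d → ℝ) :
    0 ≤ ∑ a : Fin m, ∑ b : Fin m, r a * r b * Real.exp (∑ j : Fin d, v a j * v b j) := by
  have hexp : ∀ t : ℝ, Real.exp t = ∑' n : ℕ, t ^ n / n ! := by
    intro t
    rw [Real.exp_eq_exp_ℝ, NormedSpace.exp_eq_tsum_div]
  have hsummable : ∀ a b : Fin m,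
      Summable (fun n : ℕ => r a * r b * ((∑ j, v a j * v b j) ^ n / n !)) :=
    fun a b => (Real.summable_pow_div_factorial _).mul_left _
  have swap : ∑ a : Fin m, ∑ b : Fin m, r a * r b * Real.exp (∑ j : Fin d, v a j * v b j)
      = ∑' n : ℕ, ∑ a : Fin m, ∑ b : Fin m,
          r a * r b * ((∑ j : Fin d, v a j * v b j) ^ n / n !) := by
    simp_rw [hexp, ← tsum_mul_left]
    have inner : ∀ a : Fin m,
        ∑ b : Fin m, ∑' n : ℕ, r a * r b * ((∑ j, v a j * v b j) ^ n / n !)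
        = ∑' n : ℕ, ∑ b : Fin m, r a * r b * ((∑ j, v a j * v b j) ^ n / n !) :=
      fun a => (Summable.tsum_finsetSum fun b _ => hsummable a b).symm
    simp_rw [inner]
    exact (Summable.tsum_finsetSum fun a _ => (hasSum_sum fun b _ => (hsummable a b).hasSum).summable).symm
  rw [swap]
  refine tsum_nonneg fun n => ?_
  have key : ∑ a : Fin m, ∑ b : Fin m, r a * r b * ((∑ j, v a j * v b j) ^ n / n !)
      = (∑ a : Fin m, ∑ b : Fin m, r a * r b * (∑ j, v a j * v b j) ^ n) / n ! := by
    rw [Finset.sum_div]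
    refine Finset.sum_congr rfl fun a _ => ?_
    rw [Finset.sum_div]
    exact Finset.sum_congr rfl fun b _ => by ring
  rw [key]
  refine div_nonneg ?_ (by positivity)
  have expand : ∀ a b : Fin m, r a * r b * (∑ j, v a j * v b j) ^ n
      = ∑ p : Fin n → Fin d, (r a * ∏ i, v a (p i)) * (r b * ∏ i, v b (p i)) := by
    intro a b
    rw [Fintype.sum_pow, Finset.mul_sum]
    refine Finset.sum_congr rfl fun p _ => ?_
    rw [Finset.prod_mul_distrib]
    ring
  simp_rw [expand]
  rw [sum_sum_eq_sq]
  exact Finset.sum_nonneg fun p _ => sq_nonneg _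

private lemma component_psd {d m : ℕ} (μ σ : Fin d → ℝ)
    (Δ : Fin m → Fin d → ℝ) (c : Fin m → ℝ) :
    0 ≤ ∑ a : Fin m, ∑ b : Fin m, c a * c b *
      ∏ j : Fin d, Real.cos (2 * π * μ j * (Δ a j - Δ b j)) *
        Real.exp (-(2 * π ^ 2) * (σ j) ^ 2 * (Δ a j - Δ b j) ^ 2) := by
  set α : Fin d → ℝ := fun j => 2 * π ^ 2 * (σ j) ^ 2 with hα
  have hα0 : ∀ j, 0 ≤ α j := fun j => by positivity
  set D : Fin m → ℝ := fun a => ∏ j, Real.exp (-(α j) * (Δ a j) ^ 2) with hD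
  set v : Fin m → Fin d → ℝ := fun a j => Real.sqrt (2 * α j) * Δ a j with hv
  set A : (Fin d → Bool) → Fin m → ℝ := fun ε a =>
    ∏ j, (if ε j then Real.sin (2 * π * μ j * Δ a j) else Real.cos (2 * π * μ j * Δ a j)) with hA
  have key : ∀ a b : Fin m,
      (∏ j : Fin d, Real.cos (2 * π * μ j * (Δ a j - Δ b j)) *
        Real.exp (-(2 * π ^ 2) * (σ j) ^ 2 * (Δ a j - Δ b j) ^ 2))
      = (∑ ε : Fin d → Bool, A ε a * A ε b) *
          (D a * D b * Real.exp (∑ j, v a j * v b j)) := by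
    intro a b
    rw [Finset.prod_mul_distrib]
    congr 1
    · -- cos part
      have hcos : ∀ j : Fin d, Real.cos (2 * π * μ j * (Δ a j - Δ b j))
          = ∑ e : Bool, (if e then Real.sin (2 * π * μ j * Δ a j)
              else Real.cos (2 * π * μ j * Δ a j)) *
            (if e then Real.sin (2 * π * μ j * Δ b j)
              else Real.cos (2 * π * μ j * Δ b j)) := by
        intro j
        have : 2 * π * μ j * (Δ a j - Δ b j)
            = 2 * π * μ j * Δ a j - 2 * π * μ j * Δ b j := by ring
        rw [this, Real.cos_sub]
        simp [Fintype.sum_bool]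
        ring
      simp_rw [hcos]
      rw [Fintype.prod_sum]
      refine Finset.sum_congr rfl fun ε _ => ?_
      rw [hA]
      simp only
      rw [← Finset.prod_mul_distrib]
    · -- exp part
      have hexpj : ∀ j : Fin d, Real.exp (-(2 * π ^ 2) * (σ j) ^ 2 * (Δ a j - Δ b j) ^ 2)
          = Real.exp (-(α j) * (Δ a j) ^ 2) * Real.exp (-(α j) * (Δ b j) ^ 2) *
              Real.exp (v a j * v b j) := by
        intro j
        rw [← Real.exp_add, ← Real.exp_add]
        congr 1
        have hs : v a j * v b j = 2 * α j * (Δ a j * Δ b j) := by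
          rw [hv]
          simp only
          have : Real.sqrt (2 * α j) * Δ a j * (Real.sqrt (2 * α j) * Δ b j)
              = Real.sqrt (2 * α j) * Real.sqrt (2 * α j) * (Δ a j * Δ b j) := by ring
          rw [this, Real.mul_self_sqrt (by linarith [hα0 j])]
        rw [hs, hα]
        ring
      simp_rw [hexpj]
      rw [Finset.prod_mul_distrib, Finset.prod_mul_distrib, Real.exp_sum, hD]
  have rearrange : ∑ a : Fin m, ∑ b : Fin m, c a * c b *
      ∏ j : Fin d, Real.cos (2 * π * μ j * (Δ a j - Δ b j)) *
        Real.exp (-(2 * π ^ 2) * (σ j) ^ 2 * (Δ a j - Δ b j) ^ 2)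
      = ∑ ε : Fin d → Bool, ∑ a : Fin m, ∑ b : Fin m,
          (c a * D a * A ε a) * (c b * D b * A ε b) * Real.exp (∑ j, v a j * v b j) := by
    have E1 : ∀ a b : Fin m, c a * c b *
        ∏ j : Fin d, Real.cos (2 * π * μ j * (Δ a j - Δ b j)) *
          Real.exp (-(2 * π ^ 2) * (σ j) ^ 2 * (Δ a j - Δ b j) ^ 2)
        = ∑ ε : Fin d → Bool,
            (c a * D a * A ε a) * (c b * D b * A ε b) * Real.exp (∑ j, v a j * v b j) := by
      intro a b
      rw [key a b, Finset.sum_mul, Finset.mul_sum]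
      exact Finset.sum_congr rfl fun ε _ => by ring
    simp_rw [E1]
    exact triple_comm _
  rw [rearrange]
  exact Finset.sum_nonneg fun ε _ =>
    exp_inner_psd (fun a => c a * D a * A ε a) v

/-- The spectral-mixture kernel
`k(Δ) = ∑_{k=1}^K w_k ∏_{j=1}^d cos(2π μ_{k,j} Δ_j) exp(−2π² σ_{k,j}² Δ_j²)`, with
`w_k ≥ 0`, is a positive semidefinite function on `ℝ^d`: for any points `Δ_1, …, Δ_m`
and scalars `c_1, …, c_m`, `∑_{a,b} c_a c_b k(Δ_a − Δ_b) ≥ 0`. -/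
theorem spectral_mixture_kernel_posSemidef
    (K d : ℕ) (w : Fin K → ℝ) (μ σ : Fin K → Fin d → ℝ)
    (hw : ∀ k, 0 ≤ w k)
    (kfun : (Fin d → ℝ) → ℝ)
    (hk : ∀ Δ, kfun Δ = ∑ k : Fin K, w k *
      ∏ j : Fin d, Real.cos (2 * π * μ k j * Δ j) *
        Real.exp (-(2 * π^2) * (σ k j)^2 * (Δ j)^2)) :
    ∀ (m : ℕ) (Δ : Fin m → (Fin d → ℝ)) (c : Fin m → ℝ),
      0 ≤ ∑ a : Fin m, ∑ b : Fin m, c a * c b * kfun (Δ a - Δ b) := by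
  intro m Δ c
  have hswap : ∑ a : Fin m, ∑ b : Fin m, c a * c b * kfun (Δ a - Δ b)
      = ∑ k : Fin K, w k * ∑ a : Fin m, ∑ b : Fin m, c a * c b *
          ∏ j : Fin d, Real.cos (2 * π * μ k j * (Δ a j - Δ b j)) *
            Real.exp (-(2 * π ^ 2) * (σ k j) ^ 2 * (Δ a j - Δ b j) ^ 2) := by
    simp_rw [hk, Pi.sub_apply, Finset.mul_sum]
    rw [triple_comm]
    refine Finset.sum_congr rfl fun k _ => ?_
    refine Finset.sum_congr rfl fun a _ => ?_
    refine Finset.sum_congr rfl fun b _ => ?_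
    ring
  rw [hswap]
  exact Finset.sum_nonneg fun k _ =>
    mul_nonneg (hw k) (component_psd (μ k) (σ k) Δ c)
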